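/- arXiv:2102.10619 — 3 statements merged into one kernel-verified Lean document; each statement's English description precedes it below -/
import Mathlib

section
/- Let q ∈ ℂ with |q| = 1. The operators A, B, D on K satisfy the U_q(2) relations: BA = q·AB, A*B = q·BA*, BB* = B*B, AA* + BB* = 1, A*A + B*B = 1, AD = DA, BD = q²·DB, and DD* = D*D = 1, where * denotes the Hilbert-space adjoint. (Thus π is a *-representation of C(U_q(2)) when |q| = 1.) -/
set_option maxHeartbeats 2000000

open scoped ComplexConjugate

noncomputable section

/-- The Hilbert space `K = ℓ²(ℤ × ℤ × ℤ)` over `ℂ`. -/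
abbrev K : Type := lp (fun _ : ℤ × ℤ × ℤ => ℂ) 2

/-- The standard orthonormal basis vectors of `K`. -/
noncomputable def e (i : ℤ × ℤ × ℤ) : K := lp.single 2 i 1

lemma e_apply (i j : ℤ × ℤ × ℤ) : (e i : ∀ _ : ℤ×ℤ×ℤ, ℂ) j = if j = i then 1 else 0 := by
  rw [e, lp.single_apply]
  split_ifs with h
  · subst h; simp
  · simp [Pi.single_apply, h]

lemma inner_e (i : ℤ × ℤ × ℤ) (x : K) : (inner ℂ (e i) x : ℂ) = (x : ∀ _ : ℤ×ℤ×ℤ, ℂ) i := by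
  rw [e, lp.inner_single_left]
  simp

lemma ext_e {T S : K →L[ℂ] K} (h : ∀ i, T (e i) = S (e i)) : T = S := by
  have horth : (Submodule.span ℂ (Set.range e))ᗮ = ⊥ := by
    rw [Submodule.eq_bot_iff]
    intro x hx
    apply lp.ext
    funext i
    have := hx (e i) (Submodule.subset_span ⟨i, rfl⟩)
    rw [← inner_e i x]
    simpa using this
  have hd : Dense (Submodule.span ℂ (Set.range e) : Set K) := by
    rw [Submodule.dense_iff_topologicalClosure_eq_top,
      Submodule.topologicalClosure_eq_top_iff, horth]
  refine ContinuousLinearMap.ext_on hd ?_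
  rintro x ⟨i, rfl⟩
  exact h i

lemma star_coord (T : K →L[ℂ] K) (i j : ℤ×ℤ×ℤ) :
    ((star T) (e j) : ∀ _ : ℤ×ℤ×ℤ, ℂ) i = conj ((T (e i) : ∀ _ : ℤ×ℤ×ℤ, ℂ) j) := by
  rw [← inner_e i ((star T) (e j)), ContinuousLinearMap.star_eq_adjoint,
    ContinuousLinearMap.adjoint_inner_right]
  simp only [e]
  rw [lp.inner_single_right]
  simp

/-- the operators `A`, `B`, `D` of the defining representation of
`C(U_q(2))` (for `|q| = 1`) satisfy the `U_q(2)` relations. -/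
theorem stmt1 (q : ℂ) (hq : ‖q‖ = 1)
    (A B D : K →L[ℂ] K)
    (hA : ∀ (n r s : ℤ), A (e (n, r, s)) =
      ((1 : ℂ) / 2) • (e (n + 1, r, s - 1) + e (n + 1, r, s + 1)))
    (hB : ∀ (n r s : ℤ), B (e (n, r, s)) =
      (q ^ n / (2 * Complex.I)) • (e (n, r + 1, s - 1) - e (n, r + 1, s + 1)))
    (hD : ∀ (n r s : ℤ), D (e (n, r, s)) = e (n + 2, r, s + 1)) :
    B * A = q • (A * B) ∧
    star A * B = q • (B * star A) ∧
    B * star B = star B * B ∧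
    A * star A + B * star B = 1 ∧
    star A * A + star B * B = 1 ∧
    A * D = D * A ∧
    B * D = (q ^ 2) • (D * B) ∧
    D * star D = 1 ∧ star D * D = 1 := by
  have hq0 : q ≠ 0 := by
    intro h; rw [h] at hq; simp at hq
  have hq1 : conj q = q⁻¹ := by
    rw [← Complex.norm_mul_exp_arg_mul_I q, hq]
    simp [← Complex.exp_conj, ← Complex.exp_neg]
  -- adjoint formulas
  have hAs : ∀ n r s : ℤ, (star A) (e (n, r, s)) =
      ((1 : ℂ) / 2) • (e (n - 1, r, s - 1) + e (n - 1, r, s + 1)) := by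
    intro n r s
    apply lp.ext
    funext ⟨m, t, u⟩
    rw [star_coord, hA m t u]
    simp only [lp.coeFn_smul, lp.coeFn_add, Pi.smul_apply, Pi.add_apply, e_apply,
      smul_eq_mul, Prod.mk.injEq, map_mul, map_add, map_div₀, map_one, map_ofNat,
      apply_ite (starRingEnd ℂ), map_zero]
    have c1 : (n = m + 1 ∧ r = t ∧ s = u - 1) ↔ (m = n - 1 ∧ t = r ∧ u = s + 1) := by omega
    have c2 : (n = m + 1 ∧ r = t ∧ s = u + 1) ↔ (m = n - 1 ∧ t = r ∧ u = s - 1) := by omega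
    simp only [c1, c2]
    ring
  have hBs : ∀ n r s : ℤ, (star B) (e (n, r, s)) =
      ((q ^ n)⁻¹ * Complex.I / 2) • (e (n, r - 1, s + 1) - e (n, r - 1, s - 1)) := by
    intro n r s
    apply lp.ext
    funext ⟨m, t, u⟩
    rw [star_coord, hB m t u]
    simp only [lp.coeFn_smul, lp.coeFn_sub, Pi.smul_apply, Pi.sub_apply, e_apply,
      smul_eq_mul, Prod.mk.injEq, map_mul, map_sub, map_div₀, map_one, map_ofNat,
      apply_ite (starRingEnd ℂ), map_zero, map_zpow₀, Complex.conj_I, hq1, inv_zpow]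
    have c1 : (n = m ∧ r = t + 1 ∧ s = u - 1) ↔ (m = n ∧ t = r - 1 ∧ u = s + 1) := by omega
    have c2 : (n = m ∧ r = t + 1 ∧ s = u + 1) ↔ (m = n ∧ t = r - 1 ∧ u = s - 1) := by omega
    simp only [c1, c2]
    by_cases hm : m = n
    · subst hm
      split_ifs <;> field_simp <;> ring_nf <;> simp [Complex.I_sq] <;> try ring
    · simp [hm]
  have hDs : ∀ n r s : ℤ, (star D) (e (n, r, s)) = e (n - 2, r, s - 1) := by
    intro n r s
    apply lp.ext
    funext ⟨m, t, u⟩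
    rw [star_coord, hD m t u]
    simp only [e_apply, Prod.mk.injEq, apply_ite (starRingEnd ℂ), map_one, map_zero]
    have c1 : (n = m + 2 ∧ r = t ∧ s = u + 1) ↔ (m = n - 2 ∧ t = r ∧ u = s - 1) := by omega
    simp only [c1]
  have hqn0 : ∀ n : ℤ, q ^ n ≠ 0 := fun n => zpow_ne_zero n hq0
  refine ⟨?_, ?_, ?_, ?_, ?_, ?_, ?_, ?_, ?_⟩
  · -- B*A = q•(A*B)
    apply ext_e; rintro ⟨n, r, s⟩
    simp only [ContinuousLinearMap.mul_apply, ContinuousLinearMap.smul_apply,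
      hA, hB, map_smul, map_add, map_sub, hA, hB]
    ring_nf
    try simp only [zpow_add₀ hq0, zpow_sub₀ hq0, zpow_one, zpow_ofNat]
    match_scalars <;> (try field_simp [hqn0 n, Complex.I_ne_zero]) <;> (try ring_nf) <;>
      (try simp only [zpow_ofNat, Complex.I_sq]) <;> try ring
  · -- A* B = q • (B A*)
    apply ext_e; rintro ⟨n, r, s⟩
    simp only [ContinuousLinearMap.mul_apply, ContinuousLinearMap.smul_apply,
      hAs, hB, map_smul, map_add, map_sub]
    ring_nf
    try simp only [zpow_add₀ hq0, zpow_sub₀ hq0, zpow_one, zpow_ofNat]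
    match_scalars <;> (try field_simp [hqn0 n, Complex.I_ne_zero]) <;> (try ring_nf) <;>
      (try simp only [zpow_ofNat, Complex.I_sq]) <;> try ring
  · -- B B* = B* B
    apply ext_e; rintro ⟨n, r, s⟩
    simp only [ContinuousLinearMap.mul_apply, ContinuousLinearMap.smul_apply,
      hBs, hB, map_smul, map_add, map_sub]
    ring_nf
    try simp only [zpow_add₀ hq0, zpow_sub₀ hq0, zpow_one, zpow_ofNat]
    match_scalars <;> (try field_simp [hqn0 n, Complex.I_ne_zero]) <;> (try ring_nf) <;>
      (try simp only [zpow_ofNat, Complex.I_sq]) <;> try ring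
  · -- A A* + B B* = 1
    apply ext_e; rintro ⟨n, r, s⟩
    simp only [ContinuousLinearMap.add_apply, ContinuousLinearMap.mul_apply,
      ContinuousLinearMap.one_apply, hAs, hBs, hA, hB, map_smul, map_add, map_sub]
    ring_nf
    try simp only [zpow_add₀ hq0, zpow_sub₀ hq0, zpow_one, zpow_ofNat]
    match_scalars <;> (try field_simp [hqn0 n, Complex.I_ne_zero]) <;> (try ring_nf) <;>
      (try simp only [zpow_ofNat, Complex.I_sq]) <;> try ring
  · -- A* A + B* B = 1
    apply ext_e; rintro ⟨n, r, s⟩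
    simp only [ContinuousLinearMap.add_apply, ContinuousLinearMap.mul_apply,
      ContinuousLinearMap.one_apply, hAs, hBs, hA, hB, map_smul, map_add, map_sub]
    ring_nf
    try simp only [zpow_add₀ hq0, zpow_sub₀ hq0, zpow_one, zpow_ofNat]
    match_scalars <;> (try field_simp [hqn0 n, Complex.I_ne_zero]) <;> (try ring_nf) <;>
      (try simp only [zpow_ofNat, Complex.I_sq]) <;> try ring
  · -- A D = D A
    apply ext_e; rintro ⟨n, r, s⟩
    simp only [ContinuousLinearMap.mul_apply, hA, hD, map_smul, map_add]
    ring_nf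
  · -- B D = q² (D B)
    apply ext_e; rintro ⟨n, r, s⟩
    simp only [ContinuousLinearMap.mul_apply, ContinuousLinearMap.smul_apply,
      hB, hD, map_smul, map_sub]
    ring_nf
    try simp only [zpow_add₀ hq0, zpow_sub₀ hq0, zpow_one, zpow_ofNat]
    match_scalars <;> (try field_simp [hqn0 n, Complex.I_ne_zero]) <;> (try ring_nf) <;>
      (try simp only [zpow_ofNat, Complex.I_sq]) <;> try ring
  · -- D D* = 1
    apply ext_e; rintro ⟨n, r, s⟩
    simp only [ContinuousLinearMap.mul_apply, ContinuousLinearMap.one_apply, hDs, hD]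
    ring_nf
  · -- D* D = 1
    apply ext_e; rintro ⟨n, r, s⟩
    simp only [ContinuousLinearMap.mul_apply, ContinuousLinearMap.one_apply, hDs, hD]
    ring_nf
end
end

section
/- Let q ∈ ℂ, q ≠ 0, let a, b, D be elements of a unital ℂ-star-algebra 𝒜 satisfying the U_q(2) relations, and suppose x, y ∈ 𝒜 commute with each of a, b, D, a*, b*, D* and satisfy xy = q·yx. Then (x·Da* + y·b)·(−q̄·x·Db* + y·a) = q·(−q̄·x·Db* + y·a)·(x·Da* + y·b). (This is the computation showing that x ↦ x⊗Da* + y⊗b, y ↦ x⊗(−q̄Db*) + y⊗a extends to a right coaction of 𝒪(U_q(2)) on the quantum plane 𝒪(ℂ_q²).) -/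
open scoped ComplexConjugate

noncomputable section

/-- The q-Pochhammer symbol `(α; t)_n = Π_{r=0}^{n-1} (1 - α tʳ)`. -/
noncomputable def qPoch (α t : ℂ) (n : ℕ) : ℂ := ∏ r ∈ Finset.range n, (1 - α * t ^ r)

/-- The Gaussian binomial coefficient `binom(n,m)_t = (t;t)_n / ((t;t)_m (t;t)_{n-m})`. -/
noncomputable def qBinom (t : ℂ) (n m : ℕ) : ℂ :=
  qPoch t t n / (qPoch t t m * qPoch t t (n - m))

/-- Elements `a, b, D` of a unital ℂ-star-algebra satisfy the `U_q(2)` relations. -/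
def UqRel (q : ℂ) {A : Type*} [Ring A] [Algebra ℂ A] [StarRing A] (a b D : A) : Prop :=
  b * a = q • (a * b) ∧
  star a * b = q • (b * star a) ∧
  b * star b = star b * b ∧
  a * star a + b * star b = 1 ∧
  star a * a + (((‖q‖ : ℝ) : ℂ) ^ 2) • (star b * b) = 1 ∧
  a * D = D * a ∧
  b * D = (q ^ 2 / ((‖q‖ : ℝ) : ℂ) ^ 2) • (D * b) ∧
  D * star D = 1 ∧ star D * D = 1

set_option maxHeartbeats 2000000 in
/-- the quantum-plane relation is preserved under the right coaction of
`𝒪(U_q(2))` on `𝒪(ℂ_q²)`. -/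
theorem stmt9 {A : Type*} [Ring A] [Algebra ℂ A] [StarRing A] [StarModule ℂ A]
    (q : ℂ) (hq : q ≠ 0) (a b D : A) (h : UqRel q a b D)
    (x y : A)
    (hx : ∀ z ∈ ({a, b, D, star a, star b, star D} : Set A), Commute x z)
    (hy : ∀ z ∈ ({a, b, D, star a, star b, star D} : Set A), Commute y z)
    (hxy : x * y = q • (y * x)) :
    (x * (D * star a) + y * b) * ((-(conj q)) • (x * (D * star b)) + y * a) =
      q • (((-(conj q)) • (x * (D * star b)) + y * a) * (x * (D * star a) + y * b)) := by
  obtain ⟨h1, h2, h3, h4, h5, h6, h7, h8, h9⟩ := h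
  have hq' : conj q ≠ 0 := by simpa using hq
  have hm : (((‖q‖ : ℝ) : ℂ) ^ 2) = q * conj q := by
    norm_cast; rw [Complex.sq_norm, Complex.mul_conj]
  rw [hm] at h5 h7
  -- commuting lemmas for x, y
  have hxa := hx a (by simp)
  have hxb := hx b (by simp)
  have hxD := hx D (by simp)
  have hxa' := hx (star a) (by simp)
  have hxb' := hx (star b) (by simp)
  have hya := hy a (by simp)
  have hyb := hy b (by simp)
  have hyD := hy D (by simp)
  have hya' := hy (star a) (by simp)
  have hyb' := hy (star b) (by simp)
  -- derived relations
  have hsD : star D * star a = star a * star D := by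
    simpa [star_mul] using congrArg star h6
  have ha'D : star a * D = D * star a := by
    calc star a * D = (D * star D) * (star a * D) := by rw [h8, one_mul]
      _ = D * (star D * star a) * D := by noncomm_ring
      _ = D * star a * (star D * D) := by rw [hsD]; noncomm_ring
      _ = D * star a := by rw [h9, mul_one]
  have hsDb : star D * star b = ((conj q) ^ 2 / (q * conj q)) • (star b * star D) := by
    have := congrArg star h7
    simpa [star_mul, star_smul, map_div₀, map_mul, map_pow] using this
  have hb'D : star b * D = ((conj q) ^ 2 / (q * conj q)) • (D * star b) := by
    calc star b * D = (D * star D) * (star b * D) := by rw [h8, one_mul]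
      _ = D * (star D * star b) * D := by noncomm_ring
      _ = ((conj q) ^ 2 / (q * conj q)) • (D * star b * (star D * D)) := by
          rw [hsDb]; simp only [smul_mul_assoc, mul_smul_comm]; noncomm_ring
      _ = ((conj q) ^ 2 / (q * conj q)) • (D * star b) := by rw [h9, mul_one]
  have ha'a : star a * a = 1 - (q * conj q) • (star b * b) := by
    rw [← h5]; abel
  have haa' : a * star a = 1 - star b * b := by rw [← h3, ← h4]; abel
  have hb'a' : star b * star a = (conj q)⁻¹ • (star a * star b) := by
    have : star a * star b = (conj q) • (star b * star a) := by
      simpa [star_mul, star_smul] using congrArg star h1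
    rw [this, smul_smul, inv_mul_cancel₀ hq', one_smul]
  have hba : b * a = q • (a * b) := h1
  -- assoc-compatible variants
  have Lxa : ∀ c, a * (x * c) = x * (a * c) := fun c => hxa.symm.left_comm c
  have Lxb : ∀ c, b * (x * c) = x * (b * c) := fun c => hxb.symm.left_comm c
  have LxD : ∀ c, D * (x * c) = x * (D * c) := fun c => hxD.symm.left_comm c
  have Lxa' : ∀ c, star a * (x * c) = x * (star a * c) := fun c => hxa'.symm.left_comm c
  have Lxb' : ∀ c, star b * (x * c) = x * (star b * c) := fun c => hxb'.symm.left_comm c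
  have Lya : ∀ c, a * (y * c) = y * (a * c) := fun c => hya.symm.left_comm c
  have Lyb : ∀ c, b * (y * c) = y * (b * c) := fun c => hyb.symm.left_comm c
  have LyD : ∀ c, D * (y * c) = y * (D * c) := fun c => hyD.symm.left_comm c
  have Lya' : ∀ c, star a * (y * c) = y * (star a * c) := fun c => hya'.symm.left_comm c
  have Lyb' : ∀ c, star b * (y * c) = y * (star b * c) := fun c => hyb'.symm.left_comm c
  have Lxy : ∀ c, x * (y * c) = q • (y * (x * c)) := fun c => by
    rw [← mul_assoc, hxy, smul_mul_assoc, mul_assoc]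
  have La'D : ∀ c, star a * (D * c) = D * (star a * c) := fun c => by
    rw [← mul_assoc, ha'D, mul_assoc]
  have LaD : ∀ c, a * (D * c) = D * (a * c) := fun c => by
    rw [← mul_assoc, h6, mul_assoc]
  have Lb'D : ∀ c, star b * (D * c) = ((conj q) ^ 2 / (q * conj q)) • (D * (star b * c)) :=
    fun c => by rw [← mul_assoc, hb'D, smul_mul_assoc, mul_assoc]
  have LbD : ∀ c, b * (D * c) = (q ^ 2 / (q * conj q)) • (D * (b * c)) := fun c => by
    rw [← mul_assoc, h7, smul_mul_assoc, mul_assoc]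
  simp only [add_mul, mul_add, smul_mul_assoc, mul_smul_comm, smul_add, smul_smul,
    mul_assoc, Lxy, hxy, hxa.symm.eq, hxb.symm.eq, hxD.symm.eq, hxa'.symm.eq, hxb'.symm.eq,
    hya.symm.eq, hyb.symm.eq, hyD.symm.eq, hya'.symm.eq, hyb'.symm.eq,
    Lxa, Lxb, LxD, Lxa', Lxb', Lya, Lyb, LyD, Lya', Lyb',
    La'D, LaD, Lb'D, LbD, hb'a', hba, ha'a, haa', h3,
    mul_one, mul_sub, sub_mul, smul_sub]
  match_scalars <;> field_simp <;> ring
end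
end

section
/- Let q ∈ ℂ, q ≠ 0, and let a, b, D be elements of a unital ℂ-star-algebra satisfying the U_q(2) relations. Then the elements a′ = a*, b′ = q̄·b*, D′ = D* satisfy the U_{1/q̄}(2) relations: b′a′ = (1/q̄)·a′b′, a′*b′ = (1/q̄)·b′a′*, b′b′* = b′*b′, a′a′* + b′b′* = 1, a′*a′ + |1/q̄|²·b′*b′ = 1, a′D′ = D′a′, b′D′ = ((1/q̄)²/|1/q̄|²)·D′b′, and D′D′* = D′*D′ = 1. (This is the algebraic content of the isomorphism U_q(2) ≅ U_{1/q̄}(2) in the classification theorem.) -/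
open scoped ComplexConjugate

noncomputable section

/-- if `a, b, D` satisfy the `U_q(2)` relations then `a' = a*`,
`b' = q̄·b*`, `D' = D*` satisfy the `U_{1/q̄}(2)` relations. -/
theorem stmt18 {A : Type*} [Ring A] [Algebra ℂ A] [StarRing A] [StarModule ℂ A]
    (q : ℂ) (hq : q ≠ 0) (a b D : A) (h : UqRel q a b D) :
    UqRel (1 / conj q) (star a) ((conj q) • star b) (star D) := by
  obtain ⟨h1, h2, h3, h4, h5, h6, h7, h8, h9⟩ := h
  have hqc : (conj q : ℂ) ≠ 0 := by simpa using hq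
  have habsne : ((‖q‖ : ℝ) : ℂ) ≠ 0 := by
    simpa using (norm_ne_zero_iff.mpr hq)
  have habs : (((‖q‖ : ℝ) : ℂ)) ^ 2 = q * conj q := by
    rw [Complex.mul_conj]
    norm_cast
    exact Complex.sq_norm q
  have habs' : ‖1 / conj q‖ = 1 / ‖q‖ := by
    simp [norm_div, Complex.norm_conj]
  have hs1 : star a * star b = conj q • (star b * star a) := by
    have := congrArg star h1
    simpa [star_mul, star_smul] using this
  have hs2 : star b * a = conj q • (a * star b) := by
    have := congrArg star h2
    simpa [star_mul, star_smul] using this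
  have hs7 : star D * star b
      = ((conj q) ^ 2 / ((‖q‖ : ℝ) : ℂ) ^ 2) • (star b * star D) := by
    have := congrArg star h7
    simpa [star_mul, star_smul, map_div₀, map_pow, Complex.conj_ofReal] using this
  refine ⟨?_, ?_, ?_, ?_, ?_, ?_, ?_, ?_, ?_⟩
  · rw [smul_mul_assoc, mul_smul_comm, smul_smul, one_div, inv_mul_cancel₀ hqc,
      one_smul, hs1]
  · rw [star_star, mul_smul_comm, smul_mul_assoc, smul_smul, one_div,
      inv_mul_cancel₀ hqc, one_smul, hs2]
  · simp only [star_smul, star_star, Complex.star_def, Complex.conj_conj]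
    rw [smul_mul_assoc, mul_smul_comm, smul_mul_assoc, mul_smul_comm, smul_smul,
      smul_smul, mul_comm (conj q) q, h3]
  · simp only [star_smul, star_star, Complex.star_def, Complex.conj_conj]
    rw [smul_mul_assoc, mul_smul_comm, smul_smul, mul_comm (conj q) q, ← habs]
    exact h5
  · simp only [star_smul, star_star, Complex.star_def, Complex.conj_conj]
    rw [smul_mul_assoc, mul_smul_comm, smul_smul, smul_smul, habs']
    have hcoef : (((1 / ‖q‖ : ℝ)) : ℂ) ^ 2 * q * conj q = 1 := by
      push_cast
      rw [mul_assoc, ← habs]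
      field_simp
    rw [hcoef, one_smul]
    exact h4
  · have := congrArg star h6
    simpa [star_mul] using this.symm
  · rw [smul_mul_assoc, mul_smul_comm, hs7, smul_smul, smul_smul]
    congr 1
    rw [habs']
    have : ((‖q‖ : ℝ) : ℂ) ^ 2 ≠ 0 := pow_ne_zero _ habsne
    push_cast
    field_simp
  · rw [star_star]
    exact h9
  · rw [star_star]
    exact h8
end
end
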